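/- Let q be a real number with 0 ≤ q < 1. Then the family d ↦ (1−q^d)^{−1} indexed by positive integers d is multipliable, the series ∑_{d≥1} p(d)·q^d converges, and ∏_{d≥1} (1−q^d)^{−1} = 1 + ∑_{d≥1} p(d)·q^d, where p(d) denotes the number of partitions of the positive integer d. -/

import Mathlib

/-!
Expanding each factor `(1 - q ^ d)⁻¹` as a geometric series shows that
`∏_{d ≤ N} (1 - q ^ d)⁻¹` is the generating function of partitions with all parts at most `N`.
These counts agree with `p(n)` for `n ≤ N` and never exceed it, so the partial products are
squeezed between the partial sums `∑_{n < N} p(n) qⁿ` and the full series. The product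
converges because `∑ q^d / (1 - q^d) < ∞`.
-/

open Finset

namespace Multiset

variable {α : Type*} [DecidableEq α]

theorem prod_map_pow_eq_pow_sum {M : Type*} [CommMonoid M] (a : M) (s : Multiset ℕ) :
    (s.map (a ^ ·)).prod = a ^ s.sum := by
  induction s using Multiset.induction_on with
  | empty => simp
  | cons i s ih => simp [ih, pow_add]

def subtypeInsertEquiv {a : α} {T : Finset α} (ha : a ∉ T) :
    {s : Multiset α // ∀ i ∈ s, i ∈ insert a T} ≃ ℕ × {s : Multiset α // ∀ i ∈ s, i ∈ T} where
  toFun s := (s.1.count a, ⟨s.1.filter (· ≠ a), fun i hi => by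
    obtain ⟨his, hia⟩ := mem_filter.1 hi
    exact (Finset.mem_insert.1 (s.2 i his)).resolve_left hia⟩)
  invFun t := ⟨t.2.1 + replicate t.1 a, fun i hi => by
    rcases mem_add.1 hi with h | h
    · exact Finset.mem_insert_of_mem (t.2.2 i h)
    · rw [eq_of_mem_replicate h]
      exact Finset.mem_insert_self a T⟩
  left_inv s := Subtype.ext <| by
    change s.1.filter (· ≠ a) + replicate (s.1.count a) a = s.1
    rw [← filter_eq', add_comm]
    exact filter_add_not (· = a) s.1
  right_inv t := by
    have hnotMem : a ∉ t.2.1 := fun h => ha (t.2.2 a h)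
    ext
    · simp [count_eq_zero.2 hnotMem]
    · simp [filter_add, filter_eq_self.2 fun i hi => ne_of_mem_of_not_mem hi hnotMem,
        mem_replicate]

theorem hasSum_prod_map_subtype_forall_mem {T : Finset α} {x : α → ℝ}
    (hx0 : ∀ i ∈ T, 0 ≤ x i) (hx1 : ∀ i ∈ T, x i < 1) :
    HasSum (fun s : {s : Multiset α // ∀ i ∈ s, i ∈ T} => (s.1.map x).prod)
      (∏ i ∈ T, (1 - x i)⁻¹) := by
  induction T using Finset.induction_on with
  | empty =>
    let : Unique {s : Multiset α // ∀ i ∈ s, i ∈ (∅ : Finset α)} :=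
      ⟨⟨⟨0, by simp⟩⟩, fun s => Subtype.ext (eq_zero_of_forall_notMem fun i hi => by
        simpa using s.2 i hi)⟩
    rw [Finset.prod_empty]
    exact hasSum_unique
      (fun s : {s : Multiset α // ∀ i ∈ s, i ∈ (∅ : Finset α)} => (s.1.map x).prod)
  | insert a T ha ih =>
    have hgeo : HasSum (x a ^ ·) (1 - x a)⁻¹ :=
      hasSum_geometric_of_lt_one (hx0 a (mem_insert_self a T)) (hx1 a (mem_insert_self a T))
    have hT := ih (fun i hi => hx0 i (mem_insert_of_mem hi))
      (fun i hi => hx1 i (mem_insert_of_mem hi))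
    have hprod := hgeo.mul hT <| hgeo.summable.mul_of_nonneg hT.summable
      (fun k => pow_nonneg (hx0 a (mem_insert_self a T)) k)
      (fun s => prod_nonneg fun y hy => by
        obtain ⟨i, hi, rfl⟩ := mem_map.1 hy
        exact hx0 i (mem_insert_of_mem (s.2 i hi)))
    rw [prod_insert ha, ← (subtypeInsertEquiv ha).symm.hasSum_iff]
    refine hprod.congr_fun fun ⟨k, t⟩ => ?_
    simp [subtypeInsertEquiv, mul_comm]

end Multiset

namespace Nat.Partition

def sigmaRestrictedEquiv {T : Finset ℕ} (hT : 0 ∉ T) :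
    (Σ n, restricted n (· ∈ T)) ≃ {s : Multiset ℕ // ∀ i ∈ s, i ∈ T} where
  toFun p := ⟨p.2.1.parts, (mem_filter.1 p.2.2).2⟩
  invFun s := ⟨s.1.sum,
    ⟨⟨s.1, fun hi => Nat.pos_of_ne_zero fun h => hT (h ▸ s.2 _ hi), rfl⟩,
      mem_filter.2 ⟨mem_univ _, s.2⟩⟩⟩
  left_inv := by
    rintro ⟨_, ⟨parts, _, rfl⟩, _⟩
    rfl
  right_inv _ := rfl

theorem hasSum_card_restricted_mul_pow {T : Finset ℕ} (hT : 0 ∉ T) {q : ℝ} (h0 : 0 ≤ q)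
    (h1 : q < 1) :
    HasSum (fun n => (#(restricted n (· ∈ T)) : ℝ) * q ^ n) (∏ d ∈ T, (1 - q ^ d)⁻¹) := by
  have hmultiset := Multiset.hasSum_prod_map_subtype_forall_mem (x := (q ^ ·))
    (fun _ _ => pow_nonneg h0 _)
    (fun d hd => pow_lt_one₀ h0 h1 (ne_of_mem_of_not_mem hd hT))
  refine ((sigmaRestrictedEquiv hT).hasSum_iff.2 hmultiset).sigma fun n => ?_
  have hweight (p : restricted n (· ∈ T)) : (p.1.parts.map (q ^ ·)).prod = q ^ n := by
    rw [Multiset.prod_map_pow_eq_pow_sum, p.1.parts_sum]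
  simpa [sigmaRestrictedEquiv, hweight, nsmul_eq_mul] using
    hasSum_fintype (fun _ : restricted n (· ∈ T) => q ^ n)

theorem restricted_eq_univ {n : ℕ} {p : ℕ → Prop} [DecidablePred p]
    (h : ∀ i, 0 < i → i ≤ n → p i) : restricted n p = univ :=
  filter_true_of_mem fun x _ i hi => h i (x.parts_pos hi) (x.le_of_mem_parts hi)

variable {q : ℝ}

theorem hasSum_card_restricted_range_mul_pow (h0 : 0 ≤ q) (h1 : q < 1) (N : ℕ) :
    HasSum (fun n => (#(restricted n (· ∈ (range N).map (addRightEmbedding 1))) : ℝ) * q ^ n)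
      (∏ d ∈ range N, (1 - q ^ (d + 1))⁻¹) := by
  simpa only [prod_map, addRightEmbedding_apply] using
    hasSum_card_restricted_mul_pow (T := (range N).map (addRightEmbedding 1)) (by simp) h0 h1

theorem one_le_inv_one_sub_pow_succ (h0 : 0 ≤ q) (h1 : q < 1) (d : ℕ) :
    1 ≤ (1 - q ^ (d + 1))⁻¹ :=
  (one_le_inv₀ (sub_pos.2 (pow_lt_one₀ h0 h1 d.succ_ne_zero))).2
    (sub_le_self _ (pow_nonneg h0 _))

theorem multipliable_inv_one_sub_pow_succ (h0 : 0 ≤ q) (h1 : q < 1) :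
    Multipliable fun d : ℕ => (1 - q ^ (d + 1))⁻¹ := by
  have hpos (d : ℕ) : 0 < 1 - q ^ (d + 1) := sub_pos.2 (pow_lt_one₀ h0 h1 d.succ_ne_zero)
  have hsplit (d : ℕ) : (1 - q ^ (d + 1))⁻¹ = 1 + q ^ (d + 1) / (1 - q ^ (d + 1)) := by
    field_simp [(hpos d).ne']
    ring
  simp_rw [hsplit]
  refine Real.multipliable_one_add_of_summable <|
    ((summable_geometric_of_lt_one h0 h1).div_const (1 - q)).of_nonneg_of_le
      (fun d => div_nonneg (pow_nonneg h0 _) (hpos d).le) fun d => ?_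
  exact div_le_div₀ (pow_nonneg h0 _) (pow_le_pow_of_le_one h0 h1.le d.le_succ) (sub_pos.2 h1)
    (sub_le_sub_left (pow_le_of_le_one h0 h1.le d.succ_ne_zero) 1)

theorem prod_range_le_tprod_inv_one_sub_pow_succ (h0 : 0 ≤ q) (h1 : q < 1) (N : ℕ) :
    ∏ d ∈ range N, (1 - q ^ (d + 1))⁻¹ ≤ ∏' d : ℕ, (1 - q ^ (d + 1))⁻¹ := by
  refine Monotone.ge_of_tendsto (monotone_nat_of_le_succ fun N => ?_)
    (multipliable_inv_one_sub_pow_succ h0 h1).hasProd.tendsto_prod_nat N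
  rw [prod_range_succ]
  exact le_mul_of_one_le_right
    (prod_nonneg fun d _ => zero_le_one.trans (one_le_inv_one_sub_pow_succ h0 h1 d))
    (one_le_inv_one_sub_pow_succ h0 h1 N)

theorem sum_range_card_mul_pow_le_prod (h0 : 0 ≤ q) (h1 : q < 1) (N : ℕ) :
    ∑ n ∈ range N, (Fintype.card n.Partition : ℝ) * q ^ n
      ≤ ∏ d ∈ range N, (1 - q ^ (d + 1))⁻¹ := by
  refine le_of_eq_of_le (sum_congr rfl fun n hn => ?_)
    (sum_le_hasSum _ (fun n _ => by positivity) (hasSum_card_restricted_range_mul_pow h0 h1 N))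
  rw [restricted_eq_univ fun i hi hin =>
    mem_map.2 ⟨i - 1, by simp at hn ⊢; omega, by simp; omega⟩, Finset.card_univ]

theorem summable_card_mul_pow (h0 : 0 ≤ q) (h1 : q < 1) :
    Summable fun n => (Fintype.card n.Partition : ℝ) * q ^ n :=
  summable_of_sum_range_le (fun n => by positivity) fun N =>
    (sum_range_card_mul_pow_le_prod h0 h1 N).trans
      (prod_range_le_tprod_inv_one_sub_pow_succ h0 h1 N)

theorem prod_range_le_tsum_card_mul_pow (h0 : 0 ≤ q) (h1 : q < 1) (N : ℕ) :
    ∏ d ∈ range N, (1 - q ^ (d + 1))⁻¹ ≤ ∑' n, (Fintype.card n.Partition : ℝ) * q ^ n :=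
  hasSum_le (fun n => by gcongr; exact card_filter_le _ _)
    (hasSum_card_restricted_range_mul_pow h0 h1 N) (summable_card_mul_pow h0 h1).hasSum

theorem hasProd_inv_one_sub_pow_succ (h0 : 0 ≤ q) (h1 : q < 1) :
    HasProd (fun d : ℕ => (1 - q ^ (d + 1))⁻¹)
      (∑' n, (Fintype.card n.Partition : ℝ) * q ^ n) :=
  (multipliable_inv_one_sub_pow_succ h0 h1).hasProd_iff_tendsto_nat.2 <|
    tendsto_of_tendsto_of_tendsto_of_le_of_le (summable_card_mul_pow h0 h1).hasSum.tendsto_sum_nat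
      tendsto_const_nhds (sum_range_card_mul_pow_le_prod h0 h1)
      (prod_range_le_tsum_card_mul_pow h0 h1)

end Nat.Partition

/-- Euler's partition generating function, analytically: for `0 ≤ q < 1`, the family
`d ↦ (1 − q^d)⁻¹` over positive integers is multipliable, the series `∑_{d≥1} p(d) q^d`
converges, and `∏_{d≥1} (1 − q^d)⁻¹ = 1 + ∑_{d≥1} p(d) q^d`, where `p(d)` is the number
of partitions of `d`. -/
theorem euler_partition_gf (q : ℝ) (h0 : 0 ≤ q) (h1 : q < 1) :
    Multipliable (fun d : ℕ+ => (1 - q ^ (d : ℕ))⁻¹) ∧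
    Summable (fun d : ℕ+ => (Fintype.card (Nat.Partition (d : ℕ)) : ℝ) * q ^ (d : ℕ)) ∧
    ∏' d : ℕ+, (1 - q ^ (d : ℕ))⁻¹
      = 1 + ∑' d : ℕ+, (Fintype.card (Nat.Partition (d : ℕ)) : ℝ) * q ^ (d : ℕ) := by
  have hprod := Nat.Partition.hasProd_inv_one_sub_pow_succ h0 h1
  have hsum := Nat.Partition.summable_card_mul_pow h0 h1
  refine ⟨(multipliable_pnat_iff_multipliable_succ (f := fun n => (1 - q ^ n)⁻¹)).2
    hprod.multipliable, (summable_pnat_iff_summable_nat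
      (f := fun n => (Fintype.card n.Partition : ℝ) * q ^ n)).2 hsum, ?_⟩
  rw [tprod_pnat_eq_tprod_succ (f := fun n => (1 - q ^ n)⁻¹), hprod.tprod_eq,
    ← tsum_zero_pnat_eq_tsum_nat hsum, Fintype.card_unique, Nat.cast_one, pow_zero, mul_one]
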